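/- arXiv:2003.10474 — 4 statements merged into one kernel-verified Lean document; each statement's English description precedes it below -/
import Mathlib

section
/- Let 0 < α < 1 and 0 < T < ∞. There exists a constant C depending only on α and T such that for all 0 < t < T, ∫₀ᵗ s^{α−1} (T−t+s)^{α−1} ds ≤ C (1 + ω₂(T−t)). -/
open MeasureTheory Real Set intervalIntegral

noncomputable def omega2 (α t : ℝ) : ℝ :=
  if α = 1 / 2 then |Real.log t| else 1 + t ^ (2 * α - 1) / |α * (1 - 2 * α)|

/-! Since `τ + s ≥ max τ s`, the kernel `s^(α-1) (τ+s)^(α-1)` is at most `τ^(α-1) s^(α-1)`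
on `[0, τ]` and at most `s^(2α-2)` on `[τ, T]`. The first piece integrates to `τ^(2α-1)/α`, the
second to `(T^(2α-1) - τ^(2α-1))/(2α-1)`, or to `log T - log τ` when `α = 1/2`; both are of size
`1 + ω₂(τ)`. Enlarging `[0, t]` to `[0, T]` makes the bound uniform in `t`. -/

theorem integral_rpow_sub_one_le {r a b : ℝ} (hr : r ≠ 0) (ha : 0 < a) (hb : 0 < b) :
    ∫ s in a..b, s ^ (r - 1) ≤ (a ^ r + b ^ r) / |r| := by
  rw [integral_rpow (Or.inr ⟨by simpa [sub_eq_iff_eq_add] using hr, notMem_uIcc_of_lt ha hb⟩),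
    sub_add_cancel]
  calc (b ^ r - a ^ r) / r ≤ |b ^ r - a ^ r| / |r| := by rw [← abs_div]; exact le_abs_self _
    _ ≤ (|b ^ r| + |a ^ r|) / |r| := by gcongr; exact abs_sub _ _
    _ = (a ^ r + b ^ r) / |r| := by
      rw [abs_of_nonneg (rpow_nonneg ha.le _), abs_of_nonneg (rpow_nonneg hb.le _), add_comm]

section Kernel

variable {α τ : ℝ}

theorem intervalIntegrable_rpow_mul_add_rpow (hα : 0 < α) (hτ : 0 < τ) {a b : ℝ}
    (ha : 0 ≤ a) (hb : 0 ≤ b) :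
    IntervalIntegrable (fun s => s ^ (α - 1) * (τ + s) ^ (α - 1)) volume a b := by
  refine (intervalIntegrable_rpow' (by linarith)).mul_continuousOn ?_
  refine ContinuousOn.rpow_const (by fun_prop) fun s hs => Or.inl ?_
  have : 0 ≤ s := (le_min ha hb).trans hs.1
  positivity

theorem integral_rpow_mul_add_rpow_mono (hα : 0 < α) (hτ : 0 < τ) {t T : ℝ}
    (ht : 0 ≤ t) (htT : t ≤ T) :
    ∫ s in (0 : ℝ)..t, s ^ (α - 1) * (τ + s) ^ (α - 1)
      ≤ ∫ s in (0 : ℝ)..T, s ^ (α - 1) * (τ + s) ^ (α - 1) := by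
  refine integral_mono_interval le_rfl ht htT ?_
    (intervalIntegrable_rpow_mul_add_rpow hα hτ le_rfl (ht.trans htT))
  refine (ae_restrict_iff' measurableSet_Ioc).2 (ae_of_all _ fun s hs => ?_)
  have : 0 < s := hs.1
  positivity

theorem integral_rpow_mul_add_rpow_le (hα : 0 < α) (hα1 : α ≤ 1) (hτ : 0 < τ) {T : ℝ}
    (hτT : τ ≤ T) :
    ∫ s in (0 : ℝ)..T, s ^ (α - 1) * (τ + s) ^ (α - 1)
      ≤ τ ^ (2 * α - 1) / α + ∫ s in τ..T, s ^ (2 * α - 2) := by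
  have hf : ∀ {a b : ℝ}, 0 ≤ a → 0 ≤ b →
      IntervalIntegrable (fun s => s ^ (α - 1) * (τ + s) ^ (α - 1)) volume a b :=
    intervalIntegrable_rpow_mul_add_rpow hα hτ
  rw [← integral_add_adjacent_intervals (hf le_rfl hτ.le) (hf hτ.le (hτ.le.trans hτT))]
  gcongr ?_ + ?_
  · calc ∫ s in (0 : ℝ)..τ, s ^ (α - 1) * (τ + s) ^ (α - 1)
        ≤ ∫ s in (0 : ℝ)..τ, s ^ (α - 1) * τ ^ (α - 1) :=
          integral_mono_on hτ.le (hf le_rfl hτ.le)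
            ((intervalIntegrable_rpow' (by linarith)).mul_const _) fun s hs =>
            mul_le_mul_of_nonneg_left (rpow_le_rpow_of_nonpos hτ (by linarith [hs.1])
              (by linarith)) (rpow_nonneg hs.1 _)
      _ = τ ^ (2 * α - 1) / α := by
          rw [intervalIntegral.integral_mul_const, integral_rpow (Or.inl (by linarith)),
            sub_add_cancel, zero_rpow hα.ne', sub_zero, div_mul_eq_mul_div, ← rpow_add hτ]
          ring_nf
  · refine integral_mono_on hτT (hf hτ.le (hτ.le.trans hτT))
      (intervalIntegrable_rpow (Or.inr (notMem_uIcc_of_lt hτ (hτ.trans_le hτT)))) fun s hs => ?_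
    have hs0 : 0 < s := hτ.trans_le hs.1
    calc s ^ (α - 1) * (τ + s) ^ (α - 1) ≤ s ^ (α - 1) * s ^ (α - 1) :=
          mul_le_mul_of_nonneg_left (rpow_le_rpow_of_nonpos hs0 (by linarith)
            (by linarith)) (rpow_nonneg hs0.le _)
      _ = s ^ (2 * α - 2) := by rw [← rpow_add hs0]; ring_nf

theorem integral_rpow_mul_add_rpow_le_omega2_of_eq_half (hα : α = 1 / 2) (hτ : 0 < τ) {T : ℝ}
    (hτT : τ ≤ T) :
    ∫ s in (0 : ℝ)..T, s ^ (α - 1) * (τ + s) ^ (α - 1)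
      ≤ (2 + |log T|) * (1 + omega2 α τ) := by
  subst hα
  have hlog : ∫ s in τ..T, s ^ (2 * (1 / 2 : ℝ) - 2) = log T - log τ := by
    rw [show 2 * (1 / 2 : ℝ) - 2 = -1 by norm_num]
    simp only [rpow_neg_one]
    rw [integral_inv_of_pos hτ (hτ.trans_le hτT), log_div (hτ.trans_le hτT).ne' hτ.ne']
  have hkernel := integral_rpow_mul_add_rpow_le (α := 1 / 2) (by norm_num) (by norm_num) hτ hτT
  rw [hlog, show 2 * (1 / 2 : ℝ) - 1 = 0 by norm_num, rpow_zero] at hkernel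
  rw [omega2, if_pos rfl]
  nlinarith [le_abs_self (log T), neg_abs_le (log τ), abs_nonneg (log T), abs_nonneg (log τ),
    mul_nonneg (abs_nonneg (log T)) (abs_nonneg (log τ))]

theorem integral_rpow_mul_add_rpow_le_omega2_of_ne_half (hα : 0 < α) (hα1 : α < 1)
    (hα2 : α ≠ 1 / 2) (hτ : 0 < τ) {T : ℝ} (hτT : τ ≤ T) :
    ∫ s in (0 : ℝ)..T, s ^ (α - 1) * (τ + s) ^ (α - 1)
      ≤ (2 + T ^ (2 * α - 1) / |2 * α - 1|) * (1 + omega2 α τ) := by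
  have hr : 2 * α - 1 ≠ 0 := fun h => hα2 (by linarith)
  have hc : 0 < |2 * α - 1| := abs_pos.2 hr
  have htail := integral_rpow_sub_one_le hr hτ (hτ.trans_le hτT)
  rw [show 2 * α - 1 - 1 = 2 * α - 2 by ring] at htail
  have hkernel := integral_rpow_mul_add_rpow_le hα hα1.le hτ hτT
  have hd : |α * (1 - 2 * α)| = α * |2 * α - 1| := by
    rw [abs_mul, abs_of_pos hα, abs_sub_comm]
  have hcα : |2 * α - 1| + α ≤ 2 := by
    linarith [abs_le.2 (⟨by linarith, by linarith⟩ : -1 ≤ 2 * α - 1 ∧ 2 * α - 1 ≤ 1)]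
  rw [omega2, if_neg hα2, hd]
  set u := τ ^ (2 * α - 1)
  set c := |2 * α - 1|
  have hK : 0 ≤ T ^ (2 * α - 1) / c := div_nonneg (rpow_nonneg (hτ.le.trans hτT) _) hc.le
  have hp : 0 ≤ u / (α * c) := div_nonneg (rpow_nonneg hτ.le _) (by positivity)
  have hsplit : u / α + (u + T ^ (2 * α - 1)) / c
      = (c + α) * (u / (α * c)) + T ^ (2 * α - 1) / c := by
    field_simp
    ring
  nlinarith [mul_le_mul_of_nonneg_right hcα hp, mul_nonneg hK hp]

end Kernel

/-- Convolution-kernel integral estimate: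
`∫₀ᵗ s^(α−1) (T−t+s)^(α−1) ds ≤ C (1 + ω₂(T−t))` for all `0 < t < T`. -/
theorem convolution_kernel_integral_omega2
    (α T : ℝ) (hα : 0 < α) (hα1 : α < 1) (hT : 0 < T) :
    ∃ C > (0 : ℝ), ∀ t ∈ Set.Ioo (0 : ℝ) T,
      (∫ s in (0 : ℝ)..t, s ^ (α - 1) * (T - t + s) ^ (α - 1))
        ≤ C * (1 + omega2 α (T - t)) := by
  obtain ⟨C, hC, hkernel⟩ : ∃ C > (0 : ℝ), ∀ τ ∈ Ioc 0 T,
      ∫ s in (0 : ℝ)..T, s ^ (α - 1) * (τ + s) ^ (α - 1) ≤ C * (1 + omega2 α τ) := by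
    by_cases hα2 : α = 1 / 2
    · exact ⟨_, by positivity, fun τ hτ =>
        integral_rpow_mul_add_rpow_le_omega2_of_eq_half hα2 hτ.1 hτ.2⟩
    · exact ⟨_, by positivity, fun τ hτ =>
        integral_rpow_mul_add_rpow_le_omega2_of_ne_half hα hα1 hα2 hτ.1 hτ.2⟩
  refine ⟨C, hC, fun t ht => ?_⟩
  have hτ : T - t ∈ Ioc 0 T := ⟨by linarith [ht.2], by linarith [ht.1]⟩
  exact (integral_rpow_mul_add_rpow_mono hα hτ.1 ht.1.le ht.2.le).trans (hkernel _ hτ)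
end

section
/- Let 0 < α < 1, σ ≥ 1 and T > 0. There exists a constant C depending only on α, σ and T such that for every integer M ≥ 2, setting t_j := (j/M)^σ · T/2 for 0 ≤ j ≤ M, one has ∑_{j=2}^{M} (t_j − t_{j−1})^{3−α} ≤ C M^{α−2}. -/
/-!
On `[0, 1]` the derivative `σ x ^ (σ - 1)` of `x ^ σ` is at most `σ` when `σ ≥ 1`, so by the mean
value theorem every step of the graded mesh has length at most `σ T / (2 M)`. Summing the
`(3 - α)`-th powers of at most `M` such steps gives `(σ T / 2) ^ (3 - α) · M ^ (1 - (3 - α))`.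
-/

open Real Finset

lemma rpow_sub_rpow_le_mul_sub_of_le_one {σ a b : ℝ} (hσ : 1 ≤ σ) (hb : 0 ≤ b) (hba : b ≤ a)
    (ha : a ≤ 1) : a ^ σ - b ^ σ ≤ σ * (a - b) := by
  have hderiv : ∀ x, HasDerivAt (fun x : ℝ => x ^ σ) (σ * x ^ (σ - 1)) x := fun x =>
    hasDerivAt_rpow_const (Or.inr hσ)
  refine (convex_Icc 0 1).image_sub_le_mul_sub_of_deriv_le
    (fun x _ => (hderiv x).continuousAt.continuousWithinAt)
    (fun x _ => (hderiv x).differentiableAt.differentiableWithinAt) (fun x hx => ?_)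
    b ⟨hb, hba.trans ha⟩ a ⟨hb.trans hba, ha⟩ hba
  rw [interior_Icc] at hx
  rw [(hderiv x).deriv]
  have : x ^ (σ - 1) ≤ 1 := rpow_le_one hx.1.le hx.2.le (by linarith)
  nlinarith

lemma graded_mesh_step_le {σ L : ℝ} (hσ : 1 ≤ σ) (hL : 0 ≤ L) {j M : ℕ} (hj : 1 ≤ j)
    (hjM : j ≤ M) :
    ((j : ℝ) / M) ^ σ * L - (((j : ℝ) - 1) / M) ^ σ * L ≤ σ * L / M := by
  have hM : (0 : ℝ) < M := by exact_mod_cast hj.trans hjM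
  have hj1 : (1 : ℝ) ≤ j := by exact_mod_cast hj
  have hb : 0 ≤ ((j : ℝ) - 1) / M := div_nonneg (by linarith) hM.le
  have hba : ((j : ℝ) - 1) / M ≤ j / M := by gcongr; linarith
  have ha : (j : ℝ) / M ≤ 1 := (div_le_one hM).2 (by exact_mod_cast hjM)
  have hstep : (j : ℝ) / M - ((j : ℝ) - 1) / M = 1 / M := by field_simp; ring
  calc ((j : ℝ) / M) ^ σ * L - (((j : ℝ) - 1) / M) ^ σ * L
      = (((j : ℝ) / M) ^ σ - (((j : ℝ) - 1) / M) ^ σ) * L := by ring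
    _ ≤ σ * (1 / M) * L := by
      gcongr
      exact hstep ▸ rpow_sub_rpow_le_mul_sub_of_le_one hσ hb hba ha
    _ = σ * L / M := by ring

lemma graded_mesh_step_nonneg {σ L : ℝ} (hσ : 0 ≤ σ) (hL : 0 ≤ L) {j M : ℕ} (hj : 1 ≤ j) :
    0 ≤ ((j : ℝ) / M) ^ σ * L - (((j : ℝ) - 1) / M) ^ σ * L := by
  have hj1 : (1 : ℝ) ≤ j := by exact_mod_cast hj
  have : (((j : ℝ) - 1) / M) ^ σ ≤ ((j : ℝ) / M) ^ σ :=
    rpow_le_rpow (div_nonneg (by linarith) M.cast_nonneg) (by gcongr; linarith) hσ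
  nlinarith

lemma sum_rpow_le_of_le_div {ι : Type*} (s : Finset ι) (f : ι → ℝ) {c p : ℝ} {M : ℕ}
    (hM : 0 < M) (hs : #s ≤ M) (hc : 0 ≤ c) (hp : 0 ≤ p) (hf0 : ∀ i ∈ s, 0 ≤ f i)
    (hf : ∀ i ∈ s, f i ≤ c / M) :
    ∑ i ∈ s, f i ^ p ≤ c ^ p * (M : ℝ) ^ (1 - p) := by
  have hM : (0 : ℝ) < M := by exact_mod_cast hM
  calc ∑ i ∈ s, f i ^ p
      ≤ ∑ _i ∈ s, (c / M) ^ p := sum_le_sum fun i hi => rpow_le_rpow (hf0 i hi) (hf i hi) hp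
    _ = #s * (c / M) ^ p := by rw [sum_const, nsmul_eq_mul]
    _ ≤ M * (c / M) ^ p := by gcongr
    _ = c ^ p * (M : ℝ) ^ (1 - p) := by
      rw [div_rpow hc hM.le, rpow_sub hM, rpow_one]
      ring

theorem graded_mesh_sum_estimate_general
    (α σ T : ℝ) (hα1 : α < 1) (hσ : 1 ≤ σ) (hT : 0 < T) :
    ∃ C > (0 : ℝ), ∀ M : ℕ, 2 ≤ M →
      (∑ j ∈ Finset.Icc 2 M,
        (((j : ℝ) / (M : ℝ)) ^ σ * (T / 2) - (((j : ℝ) - 1) / (M : ℝ)) ^ σ * (T / 2))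
          ^ (3 - α))
        ≤ C * (M : ℝ) ^ (α - 2) := by
  refine ⟨(σ * (T / 2)) ^ (3 - α), by positivity, fun M hM => ?_⟩
  have hL : 0 ≤ T / 2 := by positivity
  have hexp : (α - 2 : ℝ) = 1 - (3 - α) := by ring
  rw [hexp]
  refine sum_rpow_le_of_le_div _ _ (by omega) (by simp) (by positivity) (by linarith)
    (fun j hj => graded_mesh_step_nonneg (by linarith) hL (one_le_two.trans (mem_Icc.1 hj).1))
    (fun j hj => graded_mesh_step_le hσ hL (one_le_two.trans (mem_Icc.1 hj).1) (mem_Icc.1 hj).2)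

/-- Graded-mesh summation estimate: with `t_j = (j/M)^σ T/2`,
`∑_{j=2}^M (t_j − t_{j−1})^(3−α) ≤ C M^(α−2)`. -/
theorem graded_mesh_sum_estimate
    (α σ T : ℝ) (hα : 0 < α) (hα1 : α < 1) (hσ : 1 ≤ σ) (hT : 0 < T) :
    ∃ C > (0 : ℝ), ∀ M : ℕ, 2 ≤ M →
      (∑ j ∈ Finset.Icc 2 M,
        (((j : ℝ) / (M : ℝ)) ^ σ * (T / 2) - (((j : ℝ) - 1) / (M : ℝ)) ^ σ * (T / 2))
          ^ (3 - α))
        ≤ C * (M : ℝ) ^ (α - 2) :=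
  graded_mesh_sum_estimate_general α σ T hα1 hσ hT
end

section
/- Let 0 < α < 1, 0 < r < min{1/2, (1−α)/α}, T > 0, and let σ be a real number with σ > max{1, (2−α)/((2r−1)α+1)}. There exists a constant C depending only on α, r, σ and T such that for every integer M ≥ 2, setting t_j := (j/M)^σ · T/2 for 0 ≤ j ≤ M, one has ∑_{j=2}^{M} t_{j−1}^{2(αr+α−1)} (t_j − t_{j−1})^{3−α} ≤ C M^{α−2}. -/
/-!
Write `t_j = c (j/M)^σ` with `a = 2(αr+α−1) ≤ 0` and `b = 3−α`. Since `t_{j−1} ≥ 2^{−σ} t_j`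
for `j ≥ 2`, and by convexity of `x ↦ x^σ` the increment `t_j − t_{j−1}` is at most
`σ c (j/M)^{σ−1} / M`, the `j`-th term is at most `K M^{−b} (j/M)^e` with
`e = σa + (σ−1)b`. The lower bound on `σ` guarantees `e > −1`, so
`∑_{j ≤ M} (j/M)^e ≤ M / min(e+1, 1)`: by concavity of `x ↦ x^γ` for `γ ≤ 1`, `γ j^{γ−1}` is
bounded by the telescoping increment `j^γ − (j−1)^γ`. Finally `M^{−b} · M = M^{α−2}`.
-/

open Finset Real

theorem rpow_sub_rpow_le_mul_rpow_sub_one_mul {p x y : ℝ} (hp : 1 ≤ p) (hx : 0 < x)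
    (hy : 0 ≤ y) : x ^ p - y ^ p ≤ p * x ^ (p - 1) * (x - y) := by
  have hs : -1 ≤ (y - x) / x := by rw [le_div_iff₀ hx]; linarith
  have hy_eq : y = x * (1 + (y - x) / x) := by field_simp; ring
  have h := mul_le_mul_of_nonneg_left (one_add_mul_self_le_rpow_one_add hs hp)
    (rpow_nonneg hx.le p)
  rw [← mul_rpow hx.le (by linarith), ← hy_eq] at h
  have : x ^ p * ((y - x) / x) = x ^ (p - 1) * (y - x) := by
    rw [rpow_sub_one hx.ne']; ring
  nlinarith

theorem mul_rpow_sub_one_mul_le_rpow_sub_rpow {p x y : ℝ} (hp0 : 0 ≤ p) (hp1 : p ≤ 1)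
    (hx : 0 < x) (hy : 0 ≤ y) : p * x ^ (p - 1) * (x - y) ≤ x ^ p - y ^ p := by
  have hs : -1 ≤ (y - x) / x := by rw [le_div_iff₀ hx]; linarith
  have hy_eq : y = x * (1 + (y - x) / x) := by field_simp; ring
  have h := mul_le_mul_of_nonneg_left (rpow_one_add_le_one_add_mul_self hs hp0 hp1)
    (rpow_nonneg hx.le p)
  rw [← mul_rpow hx.le (by linarith), ← hy_eq] at h
  have : x ^ p * ((y - x) / x) = x ^ (p - 1) * (y - x) := by
    rw [rpow_sub_one hx.ne']; ring
  nlinarith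

theorem sum_Icc_rpow_sub_one_le {γ : ℝ} (hγ0 : 0 < γ) (hγ1 : γ ≤ 1) (M : ℕ) :
    ∑ j ∈ Icc 1 M, (j : ℝ) ^ (γ - 1) ≤ (M : ℝ) ^ γ / γ := by
  induction M with
  | zero => simp [zero_rpow hγ0.ne']
  | succ n ih =>
    rw [sum_Icc_succ_top (by omega)]
    have h := mul_rpow_sub_one_mul_le_rpow_sub_rpow hγ0.le hγ1
      (Nat.cast_add_one_pos n) (Nat.cast_nonneg n)
    push_cast at h ⊢
    rw [le_div_iff₀ hγ0] at ih ⊢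
    nlinarith

theorem sum_Icc_div_rpow_le {e : ℝ} (he : -1 < e) (M : ℕ) :
    ∑ j ∈ Icc 1 M, ((j : ℝ) / M) ^ e ≤ M / min (e + 1) 1 := by
  rcases M.eq_zero_or_pos with rfl | hM
  · simp
  set γ := min (e + 1) 1
  have hγ0 : 0 < γ := lt_min (by linarith) one_pos
  have hM0 : (0 : ℝ) < M := Nat.cast_pos.mpr hM
  have hterm : ∀ j ∈ Icc 1 M,
      ((j : ℝ) / M) ^ e ≤ (j : ℝ) ^ (γ - 1) / (M : ℝ) ^ (γ - 1) := by
    intro j hj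
    obtain ⟨hj1, hjM⟩ := mem_Icc.mp hj
    rw [← div_rpow (Nat.cast_nonneg j) hM0.le]
    refine rpow_le_rpow_of_exponent_ge (by positivity) ?_ (by simp [γ])
    exact div_le_one_of_le₀ (Nat.cast_le.mpr hjM) hM0.le
  calc ∑ j ∈ Icc 1 M, ((j : ℝ) / M) ^ e
      ≤ (∑ j ∈ Icc 1 M, (j : ℝ) ^ (γ - 1)) / (M : ℝ) ^ (γ - 1) := by
        rw [sum_div]; exact sum_le_sum hterm
    _ ≤ (M : ℝ) ^ γ / γ / (M : ℝ) ^ (γ - 1) := by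
        gcongr; exact sum_Icc_rpow_sub_one_le hγ0 (min_le_right _ _) M
    _ = M / γ := by rw [rpow_sub_one hM0.ne']; field_simp

theorem mul_rpow_le_of_le_two_mul {σ a c x y : ℝ} (hσ : 0 ≤ σ) (ha : a ≤ 0) (hc : 0 ≤ c)
    (hx : 0 < x) (hxy : x ≤ 2 * y) :
    (y ^ σ * c) ^ a ≤ 2 ^ (-(σ * a)) * c ^ a * x ^ (σ * a) := by
  have hy : 0 ≤ y := by linarith
  have hx2 : (x / 2) ^ (σ * a) = 2 ^ (-(σ * a)) * x ^ (σ * a) := by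
    rw [div_rpow hx.le zero_le_two, rpow_neg zero_le_two]; ring
  calc (y ^ σ * c) ^ a = c ^ a * y ^ (σ * a) := by
        rw [mul_rpow (rpow_nonneg hy σ) hc, ← rpow_mul hy, mul_comm]
    _ ≤ c ^ a * (x / 2) ^ (σ * a) := by
        refine mul_le_mul_of_nonneg_left ?_ (rpow_nonneg hc a)
        exact rpow_le_rpow_of_nonpos (by positivity) (by linarith)
          (mul_nonpos_of_nonneg_of_nonpos hσ ha)
    _ = 2 ^ (-(σ * a)) * c ^ a * x ^ (σ * a) := by rw [hx2]; ring

theorem sub_mul_rpow_le {σ b c x y : ℝ} (hσ : 1 ≤ σ) (hb : 0 ≤ b) (hc : 0 ≤ c)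
    (hx : 0 < x) (hy : 0 ≤ y) (hyx : y ≤ x) :
    (x ^ σ * c - y ^ σ * c) ^ b ≤ σ ^ b * c ^ b * x ^ ((σ - 1) * b) * (x - y) ^ b := by
  have hinc : 0 ≤ x ^ σ - y ^ σ := sub_nonneg.mpr (rpow_le_rpow hy hyx (by linarith))
  calc (x ^ σ * c - y ^ σ * c) ^ b = (x ^ σ - y ^ σ) ^ b * c ^ b := by
        rw [← sub_mul, mul_rpow hinc hc]
    _ ≤ (σ * x ^ (σ - 1) * (x - y)) ^ b * c ^ b := by
        gcongr; exact rpow_sub_rpow_le_mul_rpow_sub_one_mul hσ hx hy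
    _ = σ ^ b * c ^ b * x ^ ((σ - 1) * b) * (x - y) ^ b := by
        rw [mul_rpow (by positivity) (by linarith), mul_rpow (by linarith) (by positivity),
          ← rpow_mul hx.le]
        ring

theorem graded_mesh_term_le {σ a b c : ℝ} (hσ : 1 ≤ σ) (ha : a ≤ 0) (hb : 0 ≤ b)
    (hc : 0 ≤ c) {j M : ℕ} (hj : 2 ≤ j) (hM : 0 < M) :
    ((((j : ℝ) - 1) / M) ^ σ * c) ^ a *
        (((j : ℝ) / M) ^ σ * c - (((j : ℝ) - 1) / M) ^ σ * c) ^ b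
      ≤ 2 ^ (-(σ * a)) * σ ^ b * (c ^ a * c ^ b) * (M : ℝ) ^ (-b) *
          ((j : ℝ) / M) ^ (σ * a + (σ - 1) * b) := by
  have hM0 : (0 : ℝ) < M := Nat.cast_pos.mpr hM
  have hj2 : (2 : ℝ) ≤ j := by exact_mod_cast hj
  have hx : 0 < (j : ℝ) / M := by positivity
  have hy : 0 ≤ ((j : ℝ) - 1) / M := div_nonneg (by linarith) hM0.le
  have hxy : (j : ℝ) / M - ((j : ℝ) - 1) / M = (M : ℝ)⁻¹ := by field_simp; ring
  have hx2y : (j : ℝ) / M ≤ 2 * (((j : ℝ) - 1) / M) := by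
    rw [mul_div_assoc']; gcongr; linarith
  have hweight := mul_rpow_le_of_le_two_mul (zero_le_one.trans hσ) ha hc hx hx2y
  have hyx : ((j : ℝ) - 1) / M ≤ (j : ℝ) / M := by gcongr; linarith
  have hinc := sub_mul_rpow_le hσ hb hc hx hy hyx
  rw [hxy, inv_rpow hM0.le, ← rpow_neg hM0.le] at hinc
  calc _ ≤ (2 ^ (-(σ * a)) * c ^ a * ((j : ℝ) / M) ^ (σ * a)) *
        (σ ^ b * c ^ b * ((j : ℝ) / M) ^ ((σ - 1) * b) * (M : ℝ) ^ (-b)) :=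
        mul_le_mul hweight hinc (rpow_nonneg (by rw [sub_nonneg]; gcongr) b) (by positivity)
    _ = _ := by rw [rpow_add hx]; ring

theorem graded_mesh_exponent_gt_neg_one {α r σ : ℝ} (hα : 0 < α) (hr : 0 < r)
    (hαr : α * r < 1 - α) (hσ : (2 - α) / ((2 * r - 1) * α + 1) < σ) :
    -1 < σ * (2 * (α * r + α - 1)) + (σ - 1) * (3 - α) := by
  have hden : 0 < (2 * r - 1) * α + 1 := by nlinarith
  have := (div_lt_iff₀ hden).mp hσ
  nlinarith

theorem weighted_graded_mesh_sum_estimate_general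
    (α r σ T : ℝ) (hα : 0 < α)
    (hr : 0 < r) (hr2 : r < min (1 / 2) ((1 - α) / α))
    (hσ : max 1 ((2 - α) / ((2 * r - 1) * α + 1)) < σ) (hT : 0 < T) :
    ∃ C > (0 : ℝ), ∀ M : ℕ, 2 ≤ M →
      (∑ j ∈ Finset.Icc 2 M,
        ((((j : ℝ) - 1) / (M : ℝ)) ^ σ * (T / 2)) ^ (2 * (α * r + α - 1)) *
          (((j : ℝ) / (M : ℝ)) ^ σ * (T / 2) - (((j : ℝ) - 1) / (M : ℝ)) ^ σ * (T / 2))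
            ^ (3 - α))
        ≤ C * (M : ℝ) ^ (α - 2) := by
  set a := 2 * (α * r + α - 1)
  set b := 3 - α
  set e := σ * a + (σ - 1) * b
  have hσ1 : 1 < σ := (le_max_left _ _).trans_lt hσ
  have hαr : α * r < 1 - α := by
    have := (lt_div_iff₀ hα).mp (hr2.trans_le (min_le_right _ _)); linarith
  have he : -1 < e :=
    graded_mesh_exponent_gt_neg_one hα hr hαr ((le_max_right _ _).trans_lt hσ)
  have ha : a ≤ 0 := by linarith
  have hb : 0 ≤ b := by nlinarith
  have hc : 0 ≤ T / 2 := by linarith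
  set K := 2 ^ (-(σ * a)) * σ ^ b * ((T / 2) ^ a * (T / 2) ^ b)
  refine ⟨K / min (e + 1) 1, div_pos (by positivity) (lt_min (by linarith) one_pos),
    fun M hM => ?_⟩
  have hM0 : (0 : ℝ) < M := by positivity
  calc _ ≤ ∑ j ∈ Icc 2 M, K * (M : ℝ) ^ (-b) * ((j : ℝ) / M) ^ e :=
        sum_le_sum fun j hj => graded_mesh_term_le hσ1.le ha hb hc (mem_Icc.mp hj).1 (by omega)
    _ ≤ K * (M : ℝ) ^ (-b) * ∑ j ∈ Icc 1 M, ((j : ℝ) / M) ^ e := by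
        rw [← mul_sum]
        refine mul_le_mul_of_nonneg_left ?_ (by positivity)
        exact sum_le_sum_of_subset_of_nonneg (Icc_subset_Icc_left one_le_two)
          fun _ _ _ => by positivity
    _ ≤ K * (M : ℝ) ^ (-b) * (M / min (e + 1) 1) := by gcongr; exact sum_Icc_div_rpow_le he M
    _ = K / min (e + 1) 1 * (M : ℝ) ^ (α - 2) := by
        rw [show α - 2 = -b + 1 by ring, rpow_add hM0, rpow_one]; ring

/-- Weighted graded-mesh summation estimate: with `t_j = (j/M)^σ T/2`,
`0 < r < min{1/2, (1−α)/α}` and `σ > max{1, (2−α)/((2r−1)α+1)}`,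
`∑_{j=2}^M t_{j−1}^(2(αr+α−1)) (t_j − t_{j−1})^(3−α) ≤ C M^(α−2)`. -/
theorem weighted_graded_mesh_sum_estimate
    (α r σ T : ℝ) (hα : 0 < α) (hα1 : α < 1)
    (hr : 0 < r) (hr2 : r < min (1 / 2) ((1 - α) / α))
    (hσ : max 1 ((2 - α) / ((2 * r - 1) * α + 1)) < σ) (hT : 0 < T) :
    ∃ C > (0 : ℝ), ∀ M : ℕ, 2 ≤ M →
      (∑ j ∈ Finset.Icc 2 M,
        ((((j : ℝ) - 1) / (M : ℝ)) ^ σ * (T / 2)) ^ (2 * (α * r + α - 1)) *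
          (((j : ℝ) / (M : ℝ)) ^ σ * (T / 2) - (((j : ℝ) - 1) / (M : ℝ)) ^ σ * (T / 2))
            ^ (3 - α))
        ≤ C * (M : ℝ) ^ (α - 2) :=
  weighted_graded_mesh_sum_estimate_general α r σ T hα hr hr2 hσ hT
end

section
/- Let 0 < α < 1, 0 < r < 1 and set γ := αr + α. There exists a constant C depending only on α and r such that for every t₁ > 0, ∫₀^{t₁} ∫ₜ^{t₁} (s^γ − t^γ)² (s−t)^{−(1+α)} ds dt ≤ C t₁^{2αr+α+1}. -/
/-!
Write `γ = αr + α`. Factoring `s^γ - t^γ = (s^{γ/2} + t^{γ/2})(s^{γ/2} - t^{γ/2})` and using the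
subadditivity of `x ↦ x^{γ/2}` (as `γ/2 ≤ 1`) gives `(s^γ - t^γ)² ≤ 4 t₁^γ (s - t)^γ` for
`0 ≤ t ≤ s ≤ t₁`. The singular kernel then leaves `(s - t)^{αr - 1}`, which is integrable since
`αr > 0`, so each inner integral is at most `4 t₁^{2αr+α} / (αr)`; integrating in `t` over
`(0, t₁]` gives the bound with `C = 4 / (αr)`.
-/

open MeasureTheory Set

namespace intervalIntegral

/-- Unlike `intervalIntegral.integral_mono_on`, `f` need not be integrable: a non-integrable `f`
has integral `0`, which is then bounded by the nonnegativity of `f`. -/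
theorem integral_mono_on_of_nonneg {f g : ℝ → ℝ} {a b : ℝ} (hab : a ≤ b)
    (hg : IntervalIntegrable g volume a b) (hf : ∀ x ∈ Ioc a b, 0 ≤ f x)
    (hfg : ∀ x ∈ Ioc a b, f x ≤ g x) :
    ∫ x in a..b, f x ≤ ∫ x in a..b, g x := by
  rw [integral_of_le hab, integral_of_le hab]
  exact integral_mono_of_nonneg ((ae_restrict_iff' measurableSet_Ioc).2 (ae_of_all _ hf))
    hg.1 ((ae_restrict_iff' measurableSet_Ioc).2 (ae_of_all _ hfg))

end intervalIntegral

namespace Real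

theorem rpow_sub_rpow_le_rpow_sub {p t s : ℝ} (hp0 : 0 ≤ p) (hp1 : p ≤ 1) (ht : 0 ≤ t)
    (hts : t ≤ s) : s ^ p - t ^ p ≤ (s - t) ^ p := by
  have h := rpow_add_le_add_rpow (sub_nonneg.2 hts) ht hp0 hp1
  rw [sub_add_cancel] at h
  linarith

theorem sq_rpow_sub_rpow_le {γ t s T : ℝ} (hγ0 : 0 ≤ γ) (hγ2 : γ ≤ 2) (ht : 0 ≤ t)
    (hts : t ≤ s) (hsT : s ≤ T) :
    (s ^ γ - t ^ γ) ^ 2 ≤ 4 * T ^ γ * (s - t) ^ γ := by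
  have hs : 0 ≤ s := ht.trans hts
  have hsq : ∀ x : ℝ, 0 ≤ x → (x ^ (γ / 2)) ^ 2 = x ^ γ := fun x hx => by
    rw [← rpow_mul_natCast hx]; norm_num
  have hsum : s ^ (γ / 2) + t ^ (γ / 2) ≤ 2 * T ^ (γ / 2) := by
    have := rpow_le_rpow hs hsT (by positivity : 0 ≤ γ / 2)
    have := rpow_le_rpow ht (hts.trans hsT) (by positivity : 0 ≤ γ / 2)
    linarith
  have hdiff : s ^ (γ / 2) - t ^ (γ / 2) ≤ (s - t) ^ (γ / 2) :=
    rpow_sub_rpow_le_rpow_sub (by positivity) (by linarith) ht hts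
  have hdiff0 : 0 ≤ s ^ (γ / 2) - t ^ (γ / 2) :=
    sub_nonneg.2 (rpow_le_rpow ht hts (by positivity))
  calc (s ^ γ - t ^ γ) ^ 2
      = (s ^ (γ / 2) + t ^ (γ / 2)) ^ 2 * (s ^ (γ / 2) - t ^ (γ / 2)) ^ 2 := by
        rw [← hsq s hs, ← hsq t ht]; ring
    _ ≤ (2 * T ^ (γ / 2)) ^ 2 * ((s - t) ^ (γ / 2)) ^ 2 := by gcongr
    _ = 4 * T ^ γ * (s - t) ^ γ := by
        rw [mul_pow, hsq T (hs.trans hsT), hsq _ (sub_nonneg.2 hts)]; ring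

end Real

open Real in
theorem integral_sq_rpow_sub_rpow_mul_rpow_le {γ α t T : ℝ} (hγ0 : 0 ≤ γ) (hγ2 : γ ≤ 2)
    (hαγ : α < γ) (ht : 0 ≤ t) (htT : t ≤ T) :
    ∫ s in t..T, (s ^ γ - t ^ γ) ^ 2 * (s - t) ^ (-(1 + α)) ≤
      4 * T ^ (2 * γ - α) / (γ - α) := by
  have hβ : 0 < γ - α := sub_pos.2 hαγ
  have hT : 0 ≤ T := ht.trans htT
  have hkernel : IntervalIntegrable (fun s => 4 * T ^ γ * (s - t) ^ (γ - α - 1)) volume t T := by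
    have := (intervalIntegral.intervalIntegrable_rpow' (a := 0) (b := T - t)
      (r := γ - α - 1) (by linarith)).comp_sub_right t
    simpa using this.const_mul (4 * T ^ γ)
  have hkernel_integral : ∫ s in t..T, 4 * T ^ γ * (s - t) ^ (γ - α - 1) =
      4 * T ^ γ * ((T - t) ^ (γ - α) / (γ - α)) := by
    rw [intervalIntegral.integral_const_mul,
      intervalIntegral.integral_comp_sub_right (fun x => x ^ (γ - α - 1)) t,
      integral_rpow (Or.inl (by linarith)), sub_self, sub_add_cancel, zero_rpow hβ.ne',
      sub_zero]
  calc ∫ s in t..T, (s ^ γ - t ^ γ) ^ 2 * (s - t) ^ (-(1 + α))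
      ≤ ∫ s in t..T, 4 * T ^ γ * (s - t) ^ (γ - α - 1) := by
        refine intervalIntegral.integral_mono_on_of_nonneg htT hkernel
          (fun s hs => by have := sub_pos.2 hs.1; positivity) fun s hs => ?_
        have hst : 0 < s - t := sub_pos.2 hs.1
        calc (s ^ γ - t ^ γ) ^ 2 * (s - t) ^ (-(1 + α))
            ≤ 4 * T ^ γ * (s - t) ^ γ * (s - t) ^ (-(1 + α)) := by
              gcongr; exact sq_rpow_sub_rpow_le hγ0 hγ2 ht hs.1.le hs.2
          _ = 4 * T ^ γ * (s - t) ^ (γ - α - 1) := by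
              rw [mul_assoc, ← rpow_add hst]; ring_nf
    _ = 4 * T ^ γ * ((T - t) ^ (γ - α) / (γ - α)) := hkernel_integral
    _ ≤ 4 * T ^ γ * (T ^ (γ - α) / (γ - α)) := by
        have := rpow_nonneg hT γ
        gcongr; linarith
    _ = 4 * T ^ (2 * γ - α) / (γ - α) := by
        rw [show 2 * γ - α = γ + (γ - α) by ring, rpow_add' hT (by linarith)]; ring

/-- First-cell Gagliardo seminorm bound: with `γ = αr + α`,
`∫₀^{t₁} ∫ₜ^{t₁} (s^γ − t^γ)² (s−t)^{−(1+α)} ds dt ≤ C t₁^(2αr+α+1)`. -/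
theorem first_cell_double_integral_estimate
    (α r : ℝ) (hα : 0 < α) (hα1 : α < 1) (hr : 0 < r) (hr1 : r < 1) :
    ∃ C > (0 : ℝ), ∀ t₁ : ℝ, 0 < t₁ →
      (∫ t in (0 : ℝ)..t₁, ∫ s in t..t₁,
          (s ^ (α * r + α) - t ^ (α * r + α)) ^ 2 * (s - t) ^ (-(1 + α)))
        ≤ C * t₁ ^ (2 * α * r + α + 1) := by
  have hαr : 0 < α * r := mul_pos hα hr
  have hγ2 : α * r + α ≤ 2 := by nlinarith
  refine ⟨4 / (α * r), by positivity, fun t₁ ht₁ => ?_⟩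
  have hbound : 4 * t₁ ^ (2 * (α * r + α) - α) / (α * r + α - α) =
      4 / (α * r) * t₁ ^ (2 * α * r + α) := by ring_nf
  calc _ ≤ ∫ _ in (0 : ℝ)..t₁, 4 / (α * r) * t₁ ^ (2 * α * r + α) := by
        refine intervalIntegral.integral_mono_on_of_nonneg ht₁.le intervalIntegrable_const
          (fun t ht => intervalIntegral.integral_nonneg ht.2 fun s hs => ?_) fun t ht => ?_
        · have := sub_nonneg.2 hs.1; positivity
        · rw [← hbound]
          exact integral_sq_rpow_sub_rpow_mul_rpow_le (by positivity) hγ2 (by linarith)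
            ht.1.le ht.2
    _ = 4 / (α * r) * t₁ ^ (2 * α * r + α + 1) := by
        rw [intervalIntegral.integral_const, smul_eq_mul, sub_zero, Real.rpow_add_one ht₁.ne']
        ring
end
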